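/- Let u, v be words over {1,...,n} of the same length and with the same content. If std(u) ≡_gram std(v) (as words over {1,...,k} where k = |u|), then u ≡_gram v, where for words over {1,...,m}, x ≡_gram y means that for all 1 ≤ p ≤ q ≤ m the maximum lengths of weakly increasing subsequences with entries in [p,q] agree in x and y. -/

import Mathlib

/-- The maximum length of a weakly increasing subsequence of `w` all of whose
letters lie in the interval `[p, q]`. -/
def wis (w : List ℕ) (p q : ℕ) : ℕ :=
  ((w.sublists.filter (fun s => decide (s.Pairwise (· ≤ ·) ∧ ∀ a ∈ s, p ≤ a ∧ a ≤ q))).map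
    List.length).foldr max 0

/-- The standardisation of a word: the j-th occurrence (left to right) of a letter c
is replaced by j plus the number of letters strictly smaller than c. -/
def stdWord (u : List ℕ) : List ℕ :=
  (List.range u.length).map
    (fun i => (u.take (i + 1)).count (u.getD i 0) + u.countP (fun a => decide (a < u.getD i 0)))

/-!
The standardisation of `w` orders the positions of `w` by letter, ties broken from left to right.
So a subsequence of `w` is weakly increasing exactly when the same positions carry an
increasing subsequence of `std w`, and its letters lie in `[p, q]` exactly when the
corresponding standardised letters lie in `[#{a < p} + 1, #{a ≤ q}]`, counts taken in `w`.
Hence `w_{p,q} = (std w)_{P,Q}` with `P, Q` depending only on the content of `w`, and the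
hypothesis on `std u` and `std v` transfers to `u` and `v`.
-/

section Wis

lemma le_wis {w s : List ℕ} {p q : ℕ} (hs : s.Sublist w) (hsorted : s.Pairwise (· ≤ ·))
    (hrange : ∀ a ∈ s, p ≤ a ∧ a ≤ q) : s.length ≤ wis w p q := by
  refine List.le_max_of_le' 0 (List.mem_map_of_mem (List.mem_filter.mpr ?_)) le_rfl
  simpa using ⟨hs, hsorted, hrange⟩

lemma wis_le {w : List ℕ} {p q k : ℕ}
    (h : ∀ s : List ℕ, s.Sublist w → s.Pairwise (· ≤ ·) → (∀ a ∈ s, p ≤ a ∧ a ≤ q) →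
      s.length ≤ k) :
    wis w p q ≤ k := by
  refine List.max_le_of_forall_le _ k ?_
  simp only [List.mem_map, List.mem_filter, List.mem_sublists, decide_eq_true_eq]
  rintro _ ⟨s, ⟨hs, hsorted, hrange⟩, rfl⟩
  exact h s hs hsorted hrange

lemma wis_eq_zero_of_lt {w : List ℕ} {p q : ℕ} (h : q < p) : wis w p q = 0 :=
  Nat.le_zero.mp <| wis_le fun
    | [], _, _, _ => le_rfl
    | a :: _, _, _, hrange => absurd (hrange a List.mem_cons_self) (by omega)

/-- Read a subsequence of `w` off the pairs `w.zip w'` and keep the second coordinates. -/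
lemma wis_le_wis_of_zip {w w' : List ℕ} (hlen : w.length = w'.length) {p q p' q' : ℕ}
    (hmono : (w.zip w').Pairwise fun x y => x.1 ≤ y.1 → x.2 ≤ y.2)
    (hrange : ∀ x ∈ w.zip w', p ≤ x.1 ∧ x.1 ≤ q → p' ≤ x.2 ∧ x.2 ≤ q') :
    wis w p q ≤ wis w' p' q' := by
  refine wis_le fun s hs hsorted hsrange => ?_
  rw [← List.map_fst_zip hlen.le, List.sublist_map_iff] at hs
  obtain ⟨z, hz, rfl⟩ := hs
  have hsub : (z.map Prod.snd).Sublist w' := List.map_snd_zip hlen.ge ▸ hz.map Prod.snd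
  have hsorted' : (z.map Prod.snd).Pairwise (· ≤ ·) :=
    List.pairwise_map.mpr <|
      ((hmono.sublist hz).and (List.pairwise_map.mp hsorted)).imp fun h => h.1 h.2
  have hrange' : ∀ b ∈ z.map Prod.snd, p' ≤ b ∧ b ≤ q' := by
    simp only [List.mem_map]
    rintro _ ⟨x, hx, rfl⟩
    exact hrange x (hz.subset hx) (hsrange x.1 (List.mem_map_of_mem hx))
  simpa using le_wis hsub hsorted' hrange'

lemma wis_eq_wis_of_zip {w w' : List ℕ} (hlen : w.length = w'.length) {p q p' q' : ℕ}
    (hmono : (w.zip w').Pairwise fun x y => (x.1 ≤ y.1 ↔ x.2 ≤ y.2))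
    (hrange : ∀ x ∈ w.zip w', (p ≤ x.1 ∧ x.1 ≤ q ↔ p' ≤ x.2 ∧ x.2 ≤ q')) :
    wis w p q = wis w' p' q' := by
  refine le_antisymm (wis_le_wis_of_zip hlen (hmono.imp Iff.mp) fun x hx => (hrange x hx).mp) ?_
  rw [← List.zip_swap] at hmono hrange
  exact wis_le_wis_of_zip hlen.symm (List.pairwise_map.mp hmono |>.imp Iff.mpr)
    fun x hx => (hrange x.swap (List.mem_map_of_mem hx)).mpr

end Wis

section Standardisation

lemma countP_le_eq_countP_lt_add_count (w : List ℕ) (c : ℕ) :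
    w.countP (· ≤ c) = w.countP (· < c) + w.count c := by
  induction w with
  | nil => rfl
  | cons a l ih =>
    simp only [List.countP_cons, List.count_cons, ih]
    rcases lt_trichotomy a c with h | rfl | h
    · simp [h, h.le, h.ne]; omega
    · simp; omega
    · simp [h.not_ge, h.not_gt, h.ne']

@[simp]
lemma length_stdWord (w : List ℕ) : (stdWord w).length = w.length := by
  simp [stdWord]

lemma getElem_stdWord {w : List ℕ} {i : ℕ} (hi : i < w.length) :
    (stdWord w)[i]'(by simpa using hi) = (w.take (i + 1)).count w[i] + w.countP (· < w[i]) := by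
  simp [stdWord, List.getElem?_eq_getElem hi]

lemma countP_lt_lt_getElem_stdWord {w : List ℕ} {i : ℕ} (hi : i < w.length) :
    w.countP (· < w[i]) < (stdWord w)[i]'(by simpa using hi) := by
  have : 0 < (w.take (i + 1)).count w[i] :=
    List.count_pos_iff.mpr (List.take_append_getElem hi ▸ List.mem_append_right _ (by simp))
  rw [getElem_stdWord hi]
  omega

lemma getElem_stdWord_le_countP_le {w : List ℕ} {i : ℕ} (hi : i < w.length) :
    (stdWord w)[i]'(by simpa using hi) ≤ w.countP (· ≤ w[i]) := by
  have := (List.take_sublist (i + 1) w).count_le w[i]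
  rw [getElem_stdWord hi, countP_le_eq_countP_lt_add_count]
  omega

lemma countP_lt_le_countP_le {w : List ℕ} {a b : ℕ} (h : a < b) :
    w.countP (· ≤ a) ≤ w.countP (· < b) :=
  List.countP_mono_left fun x _ hx => by simp at hx ⊢; omega

lemma getElem_stdWord_lt_of_lt {w : List ℕ} {i j : ℕ} (hi : i < w.length) (hj : j < w.length)
    (h : w[i] < w[j]) :
    (stdWord w)[i]'(by simpa using hi) < (stdWord w)[j]'(by simpa using hj) :=
  calc _ ≤ w.countP (· ≤ w[i]) := getElem_stdWord_le_countP_le hi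
    _ ≤ w.countP (· < w[j]) := countP_lt_le_countP_le h
    _ < _ := countP_lt_lt_getElem_stdWord hj

lemma getElem_stdWord_lt_of_eq {w : List ℕ} {i j : ℕ} (hij : i < j) (hj : j < w.length)
    (h : w[i] = w[j]) :
    (stdWord w)[i]'(by simp; omega) < (stdWord w)[j]'(by simpa using hj) := by
  have hprefix : (w.take (i + 1)).count w[j] ≤ (w.take j).count w[j] :=
    (List.take_sublist_take_left (by omega)).count_le _
  rw [getElem_stdWord (hij.trans hj), getElem_stdWord hj, h, ← List.take_append_getElem hj,
    List.count_append]
  simp only [List.count_singleton_self]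
  omega

lemma pairwise_zip_stdWord (w : List ℕ) :
    (w.zip (stdWord w)).Pairwise fun x y => (x.1 ≤ y.1 ↔ x.2 ≤ y.2) := by
  rw [List.pairwise_iff_getElem]
  intro i j hi hj hij
  simp only [List.length_zip, length_stdWord, min_self] at hi hj
  simp only [List.getElem_zip]
  constructor
  · intro h
    rcases h.lt_or_eq with h | h
    · exact (getElem_stdWord_lt_of_lt hi hj h).le
    · exact (getElem_stdWord_lt_of_eq hij hj h).le
  · intro h
    by_contra! h'
    exact (getElem_stdWord_lt_of_lt hj hi h').not_ge h

lemma mem_Icc_iff_mem_Icc_of_countP {w : List ℕ} {c s p q : ℕ}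
    (hlo : w.countP (· < c) < s) (hhi : s ≤ w.countP (· ≤ c)) :
    (p ≤ c ∧ c ≤ q ↔ w.countP (· < p) + 1 ≤ s ∧ s ≤ w.countP (· ≤ q)) := by
  have hmono_lt : p ≤ c → w.countP (· < p) ≤ w.countP (· < c) :=
    fun h => List.countP_mono_left fun x _ hx => by simp at hx ⊢; omega
  have hmono_le : c ≤ q → w.countP (· ≤ c) ≤ w.countP (· ≤ q) :=
    fun h => List.countP_mono_left fun x _ hx => by simp at hx ⊢; omega
  refine ⟨fun ⟨hp, hq⟩ => ⟨by linarith [hmono_lt hp], hhi.trans (hmono_le hq)⟩,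
    fun ⟨hp, hq⟩ => ⟨?_, ?_⟩⟩
  · by_contra! h
    linarith [countP_lt_le_countP_le (w := w) h]
  · by_contra! h
    linarith [countP_lt_le_countP_le (w := w) h]

lemma wis_eq_wis_stdWord (w : List ℕ) (p q : ℕ) :
    wis w p q = wis (stdWord w) (w.countP (· < p) + 1) (w.countP (· ≤ q)) := by
  refine wis_eq_wis_of_zip (length_stdWord w).symm (pairwise_zip_stdWord w) fun x hx => ?_
  obtain ⟨i, hi, rfl⟩ := List.getElem_of_mem hx
  simp only [List.length_zip, length_stdWord, min_self] at hi
  simp only [List.getElem_zip]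
  exact mem_Icc_iff_mem_Icc_of_countP (countP_lt_lt_getElem_stdWord hi)
    (getElem_stdWord_le_countP_le hi)

end Standardisation

theorem stmt11_general (n : ℕ) (u v : List ℕ)
    (hcont : ∀ a : ℕ, u.count a = v.count a)
    (hstd : ∀ p q : ℕ, 1 ≤ p → p ≤ q → q ≤ u.length →
      wis (stdWord u) p q = wis (stdWord v) p q) :
    ∀ p q : ℕ, 1 ≤ p → p ≤ q → q ≤ n → wis u p q = wis v p q := by
  intro p q _ _ _
  have hperm : u.Perm v := List.perm_iff_count.mpr hcont
  rw [wis_eq_wis_stdWord u, wis_eq_wis_stdWord v, ← hperm.countP_eq, ← hperm.countP_eq]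
  by_cases hPQ : u.countP (· < p) + 1 ≤ u.countP (· ≤ q)
  · exact hstd _ _ (Nat.le_add_left 1 _) hPQ List.countP_le_length
  · rw [wis_eq_zero_of_lt (by omega), wis_eq_zero_of_lt (by omega)]

theorem stmt11 (n : ℕ) (u v : List ℕ)
    (hu : ∀ a ∈ u, 1 ≤ a ∧ a ≤ n) (hv : ∀ a ∈ v, 1 ≤ a ∧ a ≤ n)
    (hlen : u.length = v.length)
    (hcont : ∀ a : ℕ, u.count a = v.count a)
    (hstd : ∀ p q : ℕ, 1 ≤ p → p ≤ q → q ≤ u.length →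
      wis (stdWord u) p q = wis (stdWord v) p q) :
    ∀ p q : ℕ, 1 ≤ p → p ≤ q → q ≤ n → wis u p q = wis v p q :=
  stmt11_general n u v hcont hstd
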